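/- For a Markov potential game, there is at least one global maximizer θ* of the total potential function Φ over X, i.e., θ* ∈ argmax_{θ ∈ X} Φ(θ), that is a pure (deterministic) Nash equilibrium: each π_{i,θ_i*}(·|s) puts probability 1 on a single action, and J_i(θ_i*, θ_{-i}*) ≥ J_i(θ_i', θ_{-i}*) for every θ_i' ∈ X_i and every agent i. -/

import Mathlib

open scoped BigOperators

/-! Common framework for finite Markov games under direct policy
parameterization.  Agents are indexed by `Fin N`, the state space `S` and the
action spaces `A i` are finite.  A policy profile is `θ : ∀ i, S → A i → ℝ`,
feasible when each `θ i s` lies in the probability simplex. -/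

section MGDefs

variable {N : ℕ} {S : Type} {A : Fin N → Type}
variable [Fintype S] [∀ i, Fintype (A i)]

/-- Joint policy `π_θ(a|s) = ∏ i, θ_i(a_i|s)` induced by the per-agent
directly parameterized policies. -/
def jointPi (θ : ∀ i, S → A i → ℝ) : S → (∀ i, A i) → ℝ :=
  fun s a => ∏ i, θ i s (a i)

/-- Distribution of the state at time `t` under transition kernel `P`,
policy `π` and initial distribution `ρ`. -/
def stateDist {σ α : Type} [Fintype σ] [Fintype α] (P : σ → α → σ → ℝ)
    (π : σ → α → ℝ) (ρ : σ → ℝ) : ℕ → σ → ℝ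
  | 0 => ρ
  | t + 1 => fun s' => ∑ s, ∑ a, stateDist P π ρ t s * π s a * P s a s'

/-- Expected discounted sum `E[∑ₜ γ^t f(s_t, a_t)]` of a state-action
function `f`, under kernel `P`, policy `π`, and initial distribution `ρ`. -/
noncomputable def expDisc {σ α : Type} [Fintype σ] [Fintype α] (γ : ℝ)
    (P : σ → α → σ → ℝ) (π : σ → α → ℝ) (ρ : σ → ℝ) (f : σ → α → ℝ) : ℝ :=
  ∑' t : ℕ, γ ^ t * ∑ s, ∑ a, stateDist P π ρ t s * π s a * f s a

/-- Dirac (point-mass) distribution at `s`. -/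
def dirac {σ : Type} [DecidableEq σ] (s : σ) : σ → ℝ :=
  fun s' => if s' = s then 1 else 0

/-- Value function `V^θ(s) = E[∑ₜ γ^t f(s_t,a_t) | π_θ, s_0 = s]`. -/
noncomputable def valueV [DecidableEq S] (γ : ℝ) (P : S → (∀ i, A i) → S → ℝ)
    (θ : ∀ i, S → A i → ℝ) (f : S → (∀ i, A i) → ℝ) (s : S) : ℝ :=
  expDisc γ P (jointPi θ) (dirac s) f

/-- Total objective `J(θ) = E_{s₀ ∼ ρ}[∑ₜ γ^t f(s_t,a_t) | π_θ]`. -/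
noncomputable def Jtot (γ : ℝ) (P : S → (∀ i, A i) → S → ℝ) (ρ : S → ℝ)
    (θ : ∀ i, S → A i → ℝ) (f : S → (∀ i, A i) → ℝ) : ℝ :=
  expDisc γ P (jointPi θ) ρ f

/-- The feasible set `X = X_1 × ⋯ × X_N`, `X_i = Δ(A_i)^S`. -/
def feasible (θ : ∀ i, S → A i → ℝ) : Prop :=
  ∀ i, ∀ s, θ i s ∈ stdSimplex ℝ (A i)

/-- Discounted state-visitation measure
`d_θ(s) = (1-γ) E_{s₀∼ρ} ∑ₜ γ^t Pr^θ(s_t = s | s₀)`. -/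
noncomputable def visit (γ : ℝ) (P : S → (∀ i, A i) → S → ℝ)
    (θ : ∀ i, S → A i → ℝ) (ρ : S → ℝ) (s : S) : ℝ :=
  (1 - γ) * ∑' t : ℕ, γ ^ t * stateDist P (jointPi θ) ρ t s

end MGDefs

/-! The potential game reduces to a single-agent MDP over joint actions with reward `φ`.
Its Bellman optimality operator is a `γ`-contraction; the greedy policy `d` for the fixed
point `V*` has value `V*`, since `V*` is also the fixed point of the evaluation operator of `d`.
For any stochastic policy `π` the evaluation operator `T^π` is monotone and `T^π V* ≤ V*`,
so iterating from `V*` gives `V^π ≤ V*`. The deterministic joint policy `d` is a pure product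
profile and every product profile is a joint policy, so this profile maximizes `Φ`. By the
potential identity averaged over `ρ`, a unilateral deviation changes `J_i` exactly as much as
`Φ`, so it cannot increase `J_i`. -/

section DiscountedSum

variable {σ α : Type} [Fintype σ] [Fintype α]
  {P : σ → α → σ → ℝ} {π : σ → α → ℝ} {ρ : σ → ℝ}

lemma dirac_mem_stdSimplex [DecidableEq σ] (s : σ) : dirac s ∈ stdSimplex ℝ σ := by
  convert ite_eq_mem_stdSimplex ℝ s using 1
  ext s'
  simp [dirac, eq_comm]

lemma stateDist_succ' (t : ℕ) :
    stateDist P π ρ (t + 1) = stateDist P π (stateDist P π ρ 1) t := by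
  induction t with
  | zero => rfl
  | succ t ih => rw [stateDist, ih]; rfl

lemma stateDist_eq_sum_dirac [DecidableEq σ] (t : ℕ) (s : σ) :
    stateDist P π ρ t s = ∑ s₀, ρ s₀ * stateDist P π (dirac s₀) t s := by
  induction t generalizing s with
  | zero => simp [stateDist, dirac]
  | succ t ih =>
    simp only [stateDist, ih, Finset.sum_mul, Finset.mul_sum]
    rw [Finset.sum_comm_cycle]
    simp only [mul_assoc]

lemma stateDist_mem_stdSimplex (hP : ∀ s a, P s a ∈ stdSimplex ℝ σ)
    (hπ : ∀ s, π s ∈ stdSimplex ℝ α) (hρ : ρ ∈ stdSimplex ℝ σ) (t : ℕ) :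
    stateDist P π ρ t ∈ stdSimplex ℝ σ := by
  induction t with
  | zero => exact hρ
  | succ t ih =>
    refine ⟨fun s' => Finset.sum_nonneg fun s _ => Finset.sum_nonneg fun a _ =>
      mul_nonneg (mul_nonneg (ih.1 s) ((hπ s).1 a)) ((hP s a).1 s'), ?_⟩
    calc ∑ s', ∑ s, ∑ a, stateDist P π ρ t s * π s a * P s a s'
        = ∑ s, ∑ a, stateDist P π ρ t s * π s a * ∑ s', P s a s' := by
          simp only [Finset.mul_sum]
          exact Finset.sum_comm_cycle.symm
      _ = ∑ s, stateDist P π ρ t s * ∑ a, π s a := by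
          simp only [(hP _ _).2, mul_one, Finset.mul_sum]
      _ = 1 := by simp only [(hπ _).2, mul_one, ih.2]

lemma summable_expDisc (hP : ∀ s a, P s a ∈ stdSimplex ℝ σ)
    (hπ : ∀ s, π s ∈ stdSimplex ℝ α) {γ : ℝ} (hγ0 : 0 ≤ γ) (hγ1 : γ < 1)
    (hρ : ρ ∈ stdSimplex ℝ σ) (f : σ → α → ℝ) :
    Summable fun t : ℕ => γ ^ t * ∑ s, ∑ a, stateDist P π ρ t s * π s a * f s a := by
  refine ((summable_geometric_of_lt_one hγ0 hγ1).mul_left (∑ s, ∑ a, |f s a|)).of_norm_bounded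
    fun t => ?_
  have hD := stateDist_mem_stdSimplex hP hπ hρ t
  have hterm : ∀ s a, |stateDist P π ρ t s * π s a * f s a| ≤ |f s a| := fun s a => by
    obtain ⟨hD0, hD1⟩ := mem_Icc_of_mem_stdSimplex hD s
    obtain ⟨hπ0, hπ1⟩ := mem_Icc_of_mem_stdSimplex (hπ s) a
    rw [abs_mul, abs_of_nonneg (mul_nonneg hD0 hπ0)]
    exact mul_le_of_le_one_left (abs_nonneg _) (mul_le_one₀ hD1 hπ0 hπ1)
  rw [norm_mul, norm_pow, Real.norm_of_nonneg hγ0, Real.norm_eq_abs, mul_comm]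
  gcongr
  exact (Finset.abs_sum_le_sum_abs _ _).trans <| Finset.sum_le_sum fun s _ =>
    (Finset.abs_sum_le_sum_abs _ _).trans <| Finset.sum_le_sum fun a _ => hterm s a

lemma expDisc_eq_add (hP : ∀ s a, P s a ∈ stdSimplex ℝ σ)
    (hπ : ∀ s, π s ∈ stdSimplex ℝ α) {γ : ℝ} (hγ0 : 0 ≤ γ) (hγ1 : γ < 1)
    (hρ : ρ ∈ stdSimplex ℝ σ) (f : σ → α → ℝ) :
    expDisc γ P π ρ f
      = ∑ s, ∑ a, ρ s * π s a * f s a + γ * expDisc γ P π (stateDist P π ρ 1) f := by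
  rw [expDisc, (summable_expDisc hP hπ hγ0 hγ1 hρ f).tsum_eq_zero_add, expDisc,
    ← tsum_mul_left]
  congr 1
  · simp [stateDist]
  · exact tsum_congr fun t => by rw [stateDist_succ', pow_succ']; ring

lemma expDisc_eq_sum_dirac [DecidableEq σ] (hP : ∀ s a, P s a ∈ stdSimplex ℝ σ)
    (hπ : ∀ s, π s ∈ stdSimplex ℝ α) {γ : ℝ} (hγ0 : 0 ≤ γ) (hγ1 : γ < 1)
    (f : σ → α → ℝ) :
    expDisc γ P π ρ f = ∑ s₀, ρ s₀ * expDisc γ P π (dirac s₀) f := by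
  have hsplit : ∀ t : ℕ, γ ^ t * ∑ s, ∑ a, stateDist P π ρ t s * π s a * f s a
      = ∑ s₀, ρ s₀ * (γ ^ t * ∑ s, ∑ a, stateDist P π (dirac s₀) t s * π s a * f s a) := by
    intro t
    simp only [stateDist_eq_sum_dirac (ρ := ρ) t, Finset.sum_mul, Finset.mul_sum]
    rw [Finset.sum_comm_cycle]
    simp only [mul_assoc, mul_left_comm (γ ^ t)]
  rw [expDisc, tsum_congr hsplit, Summable.tsum_finsetSum fun s₀ _ =>
    (summable_expDisc hP hπ hγ0 hγ1 (dirac_mem_stdSimplex s₀) f).mul_left _]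
  exact Finset.sum_congr rfl fun s₀ _ => tsum_mul_left

end DiscountedSum

lemma abs_sum_mul_sub_sum_mul_le_dist {ι : Type} [Fintype ι] {w : ι → ℝ}
    (hw : w ∈ stdSimplex ℝ ι) (g h : ι → ℝ) :
    |∑ i, w i * g i - ∑ i, w i * h i| ≤ dist g h := by
  rw [← Finset.sum_sub_distrib]
  calc |∑ i, (w i * g i - w i * h i)| ≤ ∑ i, w i * dist g h := by
        refine (Finset.abs_sum_le_sum_abs _ _).trans (Finset.sum_le_sum fun i _ => ?_)
        rw [← mul_sub, abs_mul, abs_of_nonneg (hw.1 i), ← Real.dist_eq]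
        exact mul_le_mul_of_nonneg_left (dist_le_pi_dist g h i) (hw.1 i)
    _ = dist g h := by rw [← Finset.sum_mul, hw.2, one_mul]

lemma sum_mul_le_sup' {ι : Type} [Fintype ι] [Nonempty ι] {w : ι → ℝ}
    (hw : w ∈ stdSimplex ℝ ι) (g : ι → ℝ) :
    ∑ i, w i * g i ≤ Finset.univ.sup' Finset.univ_nonempty g :=
  calc ∑ i, w i * g i ≤ ∑ i, w i * Finset.univ.sup' Finset.univ_nonempty g :=
        Finset.sum_le_sum fun i _ =>
          mul_le_mul_of_nonneg_left (Finset.le_sup' g (Finset.mem_univ i)) (hw.1 i)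
    _ = Finset.univ.sup' Finset.univ_nonempty g := by rw [← Finset.sum_mul, hw.2, one_mul]

lemma abs_sup'_sub_sup'_le_dist {ι : Type} [Fintype ι] [Nonempty ι] (g h : ι → ℝ) :
    |Finset.univ.sup' Finset.univ_nonempty g - Finset.univ.sup' Finset.univ_nonempty h|
      ≤ dist g h := by
  have hle : ∀ g h : ι → ℝ, Finset.univ.sup' Finset.univ_nonempty g
      ≤ Finset.univ.sup' Finset.univ_nonempty h + dist g h := fun g h =>
    Finset.sup'_le _ _ fun i _ => by
      have hi := (le_abs_self _).trans ((Real.dist_eq _ _).symm.trans_le (dist_le_pi_dist g h i))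
      linarith [Finset.le_sup' h (Finset.mem_univ i)]
  rw [abs_sub_le_iff]
  constructor
  · linarith [hle g h]
  · linarith [hle h g, dist_comm g h]

lemma contractingWith_of_abs_sub_le {ι : Type} [Fintype ι] {γ : ℝ} (hγ0 : 0 ≤ γ) (hγ1 : γ < 1)
    {F : (ι → ℝ) → ι → ℝ} (hF : ∀ V W i, |F V i - F W i| ≤ γ * dist V W) :
    ContractingWith γ.toNNReal F := by
  refine ⟨Real.toNNReal_lt_one.mpr hγ1, LipschitzWith.of_dist_le_mul fun V W => ?_⟩
  rw [Real.coe_toNNReal γ hγ0, dist_pi_le_iff (by positivity)]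
  exact fun i => (Real.dist_eq _ _).trans_le (hF V W i)

lemma ContractingWith.fixedPoint_le_of_map_le {X : Type} [MetricSpace X] [Nonempty X]
    [CompleteSpace X] [Preorder X] [ClosedIicTopology X] {K : NNReal} {F : X → X}
    (hF : ContractingWith K F) (hmono : Monotone F) {x : X} (hx : F x ≤ x) :
    ContractingWith.fixedPoint F hF ≤ x := by
  have hiter : ∀ n, F^[n] x ≤ x := by
    intro n
    induction n with
    | zero => exact le_rfl
    | succ n ih => rw [Function.iterate_succ_apply']; exact (hmono ih).trans hx
  exact le_of_tendsto' (hF.tendsto_iterate_fixedPoint x) hiter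

def deterministicPolicy {σ α : Type} [DecidableEq α] (d : σ → α) : σ → α → ℝ :=
  fun s a => if a = d s then 1 else 0

lemma deterministicPolicy_mem_stdSimplex {σ α : Type} [Fintype α] [DecidableEq α] (d : σ → α)
    (s : σ) : deterministicPolicy d s ∈ stdSimplex ℝ α := by
  convert ite_eq_mem_stdSimplex ℝ (d s) using 1
  ext a
  simp [deterministicPolicy, eq_comm]

section Bellman

variable {σ α : Type} [Fintype σ] (γ : ℝ) (P : σ → α → σ → ℝ) (f : σ → α → ℝ)

def qValue (V : σ → ℝ) (s : σ) (a : α) : ℝ :=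
  f s a + γ * ∑ s', P s a s' * V s'

def bellmanEval [Fintype α] (π : σ → α → ℝ) (V : σ → ℝ) : σ → ℝ :=
  fun s => ∑ a, π s a * qValue γ P f V s a

def bellmanOptimal [Fintype α] [Nonempty α] (V : σ → ℝ) : σ → ℝ :=
  fun s => Finset.univ.sup' Finset.univ_nonempty (qValue γ P f V s)

noncomputable def policyValue [Fintype α] [DecidableEq σ] (π : σ → α → ℝ) : σ → ℝ :=
  fun s => expDisc γ P π (dirac s) f

variable {γ P} [Fintype α] {π : σ → α → ℝ}

lemma dist_qValue_le (hγ0 : 0 ≤ γ) (hP : ∀ s a, P s a ∈ stdSimplex ℝ σ) (V W : σ → ℝ) (s : σ) :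
    dist (qValue γ P f V s) (qValue γ P f W s) ≤ γ * dist V W := by
  refine (dist_pi_le_iff (by positivity)).mpr fun a => ?_
  rw [Real.dist_eq, qValue, qValue, add_sub_add_left_eq_sub, ← mul_sub, abs_mul,
    abs_of_nonneg hγ0]
  exact mul_le_mul_of_nonneg_left (abs_sum_mul_sub_sum_mul_le_dist (hP s a) V W) hγ0

lemma policyValue_isFixedPt [DecidableEq σ] (hγ0 : 0 ≤ γ) (hγ1 : γ < 1)
    (hP : ∀ s a, P s a ∈ stdSimplex ℝ σ) (hπ : ∀ s, π s ∈ stdSimplex ℝ α) :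
    Function.IsFixedPt (bellmanEval γ P f π) (policyValue γ P f π) := by
  funext s
  have hreward : ∑ s', ∑ a, dirac s s' * π s' a * f s' a = ∑ a, π s a * f s a := by
    simp [dirac]
  have hstep : ∀ s', stateDist P π (dirac s) 1 s' = ∑ a, π s a * P s a s' := fun s' => by
    simp [stateDist, dirac]
  rw [policyValue, expDisc_eq_add hP hπ hγ0 hγ1 (dirac_mem_stdSimplex s), hreward,
    expDisc_eq_sum_dirac hP hπ hγ0 hγ1]
  simp only [bellmanEval, qValue, policyValue, hstep, mul_add, Finset.sum_add_distrib,
    Finset.mul_sum, Finset.sum_mul]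
  rw [Finset.sum_comm]
  exact congrArg _ (Finset.sum_congr rfl fun a _ => Finset.sum_congr rfl fun s' _ => by ring)

lemma bellmanEval_contractingWith (hγ0 : 0 ≤ γ) (hγ1 : γ < 1)
    (hP : ∀ s a, P s a ∈ stdSimplex ℝ σ) (hπ : ∀ s, π s ∈ stdSimplex ℝ α) :
    ContractingWith γ.toNNReal (bellmanEval γ P f π) :=
  contractingWith_of_abs_sub_le hγ0 hγ1 fun V W s =>
    (abs_sum_mul_sub_sum_mul_le_dist (hπ s) _ _).trans (dist_qValue_le f hγ0 hP V W s)

lemma bellmanEval_monotone (hγ0 : 0 ≤ γ) (hP : ∀ s a, P s a ∈ stdSimplex ℝ σ)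
    (hπ : ∀ s, π s ∈ stdSimplex ℝ α) : Monotone (bellmanEval γ P f π) := by
  intro V W hVW s
  unfold bellmanEval qValue
  gcongr with a _ s' _
  · exact (hπ s).1 a
  · exact (hP s a).1 s'
  · exact hVW s'

lemma bellmanEval_deterministicPolicy [DecidableEq α] (d : σ → α) (V : σ → ℝ) (s : σ) :
    bellmanEval γ P f (deterministicPolicy d) V s = qValue γ P f V s (d s) := by
  simp [bellmanEval, deterministicPolicy]

variable [Nonempty α]

lemma bellmanEval_le_bellmanOptimal (hπ : ∀ s, π s ∈ stdSimplex ℝ α) (V : σ → ℝ) :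
    bellmanEval γ P f π V ≤ bellmanOptimal γ P f V :=
  fun s => sum_mul_le_sup' (hπ s) _

lemma bellmanOptimal_contractingWith (hγ0 : 0 ≤ γ) (hγ1 : γ < 1)
    (hP : ∀ s a, P s a ∈ stdSimplex ℝ σ) :
    ContractingWith γ.toNNReal (bellmanOptimal γ P f) :=
  contractingWith_of_abs_sub_le hγ0 hγ1 fun V W s =>
    (abs_sup'_sub_sup'_le_dist _ _).trans (dist_qValue_le f hγ0 hP V W s)

theorem exists_deterministicPolicy_policyValue_ge [DecidableEq σ] [DecidableEq α]
    (hγ0 : 0 ≤ γ) (hγ1 : γ < 1) (hP : ∀ s a, P s a ∈ stdSimplex ℝ σ) :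
    ∃ d : σ → α, ∀ π : σ → α → ℝ, (∀ s, π s ∈ stdSimplex ℝ α) →
      policyValue γ P f π ≤ policyValue γ P f (deterministicPolicy d) := by
  have hT := bellmanOptimal_contractingWith f hγ0 hγ1 hP
  set V := ContractingWith.fixedPoint _ hT
  choose d _ hd using fun s =>
    Finset.exists_mem_eq_sup' Finset.univ_nonempty (qValue γ P f V s)
  have hdet := deterministicPolicy_mem_stdSimplex d
  have hVd : policyValue γ P f (deterministicPolicy d) = V := by
    refine (bellmanEval_contractingWith f hγ0 hγ1 hP hdet).fixedPoint_unique'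
      (policyValue_isFixedPt f hγ0 hγ1 hP hdet) ?_
    funext s
    rw [bellmanEval_deterministicPolicy, ← hd s]
    exact congrFun (ContractingWith.fixedPoint_isFixedPt hT) s
  refine ⟨d, fun π hπ => ?_⟩
  have hEval := bellmanEval_contractingWith f hγ0 hγ1 hP hπ
  rw [hVd, hEval.fixedPoint_unique (policyValue_isFixedPt f hγ0 hγ1 hP hπ)]
  refine hEval.fixedPoint_le_of_map_le (bellmanEval_monotone f hγ0 hP hπ) ?_
  exact (bellmanEval_le_bellmanOptimal f hπ V).trans_eq
    (ContractingWith.fixedPoint_isFixedPt hT)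

end Bellman

section MarkovGame

variable {N : ℕ} {S : Type} {A : Fin N → Type} {θ θ' : ∀ i, S → A i → ℝ}

lemma jointPi_mem_stdSimplex [∀ i, Fintype (A i)] (hθ : feasible θ) (s : S) :
    jointPi θ s ∈ stdSimplex ℝ (∀ i, A i) :=
  ⟨fun a => Finset.prod_nonneg fun i _ => (hθ i s).1 (a i), by
    simp only [jointPi, ← Fintype.prod_sum]
    exact Finset.prod_eq_one fun i _ => (hθ i s).2⟩

lemma feasible_update [∀ i, Fintype (A i)] (hθ : feasible θ) {i : Fin N} {θi : S → A i → ℝ}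
    (hθi : ∀ s, θi s ∈ stdSimplex ℝ (A i)) : feasible (Function.update θ i θi) := by
  intro j s
  rcases eq_or_ne j i with rfl | hj
  · simpa using hθi s
  · simpa [Function.update_of_ne hj] using hθ j s

def pureProfile [∀ i, DecidableEq (A i)] (d : S → ∀ i, A i) : ∀ i, S → A i → ℝ :=
  fun i s a => if a = d s i then 1 else 0

lemma feasible_pureProfile [∀ i, Fintype (A i)] [∀ i, DecidableEq (A i)] (d : S → ∀ i, A i) :
    feasible (pureProfile d) :=
  fun i => deterministicPolicy_mem_stdSimplex fun s => d s i

lemma jointPi_pureProfile [∀ i, DecidableEq (A i)] (d : S → ∀ i, A i) :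
    jointPi (pureProfile d) = deterministicPolicy d := by
  funext s a
  simp [jointPi, pureProfile, deterministicPolicy, Finset.prod_ite_zero, funext_iff]

variable [Fintype S] [DecidableEq S] [∀ i, Fintype (A i)] {γ : ℝ} {P : S → (∀ i, A i) → S → ℝ}

lemma Jtot_eq_sum_valueV (hγ0 : 0 ≤ γ) (hγ1 : γ < 1) (hP : ∀ s a, P s a ∈ stdSimplex ℝ S)
    (hθ : feasible θ) (ρ : S → ℝ) (f : S → (∀ i, A i) → ℝ) :
    Jtot γ P ρ θ f = ∑ s, ρ s * valueV γ P θ f s :=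
  expDisc_eq_sum_dirac hP (jointPi_mem_stdSimplex hθ) hγ0 hγ1 f

lemma Jtot_sub_eq_of_valueV_sub_eq (hγ0 : 0 ≤ γ) (hγ1 : γ < 1)
    (hP : ∀ s a, P s a ∈ stdSimplex ℝ S) (hθ : feasible θ) (hθ' : feasible θ') (ρ : S → ℝ)
    {f g : S → (∀ i, A i) → ℝ}
    (hfg : ∀ s, valueV γ P θ' f s - valueV γ P θ f s = valueV γ P θ' g s - valueV γ P θ g s) :
    Jtot γ P ρ θ' f - Jtot γ P ρ θ f = Jtot γ P ρ θ' g - Jtot γ P ρ θ g := by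
  simp only [Jtot_eq_sum_valueV hγ0 hγ1 hP hθ, Jtot_eq_sum_valueV hγ0 hγ1 hP hθ',
    ← Finset.sum_sub_distrib, ← mul_sub, hfg]

end MarkovGame

theorem mpg_exists_pure_nash_maximizing_potential_general
    {N : ℕ} {S : Type} {A : Fin N → Type}
    [Fintype S] [DecidableEq S]
    [∀ i, Fintype (A i)] [∀ i, Nonempty (A i)]
    (γ : ℝ) (hγ0 : 0 ≤ γ) (hγ1 : γ < 1)
    (P : S → (∀ i, A i) → S → ℝ) (hP : ∀ s a, P s a ∈ stdSimplex ℝ S)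
    (r : Fin N → S → (∀ i, A i) → ℝ)
    (ρ : S → ℝ) (hρ : ρ ∈ stdSimplex ℝ S)
    (φ : S → (∀ i, A i) → ℝ)
    -- the game is an MPG with potential function φ:
    (hMPG : ∀ i : Fin N, ∀ θ : ∀ j, S → A j → ℝ, feasible θ →
      ∀ θi' : S → A i → ℝ, (∀ s, θi' s ∈ stdSimplex ℝ (A i)) → ∀ s : S,
        valueV γ P (Function.update θ i θi') (r i) s - valueV γ P θ (r i) s
          = valueV γ P (Function.update θ i θi') φ s - valueV γ P θ φ s) :
    ∃ θs : ∀ i, S → A i → ℝ,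
      feasible θs ∧
      -- θs is a global maximizer of the total potential Φ over X:
      (∀ θ : ∀ i, S → A i → ℝ, feasible θ → Jtot γ P ρ θ φ ≤ Jtot γ P ρ θs φ) ∧
      -- θs is pure (deterministic):
      (∀ i : Fin N, ∀ s : S, ∃ a : A i, θs i s a = 1) ∧
      -- θs is a Nash equilibrium:
      (∀ i : Fin N, ∀ θi' : S → A i → ℝ,
        (∀ s, θi' s ∈ stdSimplex ℝ (A i)) →
        Jtot γ P ρ (Function.update θs i θi') (r i) ≤ Jtot γ P ρ θs (r i)) := by
  classical
  obtain ⟨d, hd⟩ := exists_deterministicPolicy_policyValue_ge φ hγ0 hγ1 hP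
  have hfeas := feasible_pureProfile d
  have hmax : ∀ θ, feasible θ → Jtot γ P ρ θ φ ≤ Jtot γ P ρ (pureProfile d) φ := by
    intro θ hθ
    rw [Jtot_eq_sum_valueV hγ0 hγ1 hP hθ, Jtot_eq_sum_valueV hγ0 hγ1 hP hfeas]
    gcongr with s
    · exact hρ.1 s
    · rw [valueV, valueV, jointPi_pureProfile]
      exact hd _ (jointPi_mem_stdSimplex hθ) s
  refine ⟨pureProfile d, hfeas, hmax, fun i s => ⟨d s i, if_pos rfl⟩, fun i θi' hθi' => ?_⟩
  have hupd := feasible_update hfeas hθi'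
  have hgain := Jtot_sub_eq_of_valueV_sub_eq hγ0 hγ1 hP hfeas hupd ρ (hMPG i _ hfeas θi' hθi')
  linarith [hmax _ hupd]

/-- For a Markov potential game, there is at least one global
maximizer of the total potential function `Φ` over `X` that is a pure
(deterministic) Nash equilibrium. -/
theorem mpg_exists_pure_nash_maximizing_potential
    {N : ℕ} {S : Type} {A : Fin N → Type}
    [Fintype S] [DecidableEq S] [Nonempty S]
    [∀ i, Fintype (A i)] [∀ i, Nonempty (A i)]
    (γ : ℝ) (hγ0 : 0 ≤ γ) (hγ1 : γ < 1)
    (P : S → (∀ i, A i) → S → ℝ) (hP : ∀ s a, P s a ∈ stdSimplex ℝ S)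
    (r : Fin N → S → (∀ i, A i) → ℝ)
    (ρ : S → ℝ) (hρ : ρ ∈ stdSimplex ℝ S)
    (φ : S → (∀ i, A i) → ℝ)
    -- the game is an MPG with potential function φ:
    (hMPG : ∀ i : Fin N, ∀ θ : ∀ j, S → A j → ℝ, feasible θ →
      ∀ θi' : S → A i → ℝ, (∀ s, θi' s ∈ stdSimplex ℝ (A i)) → ∀ s : S,
        valueV γ P (Function.update θ i θi') (r i) s - valueV γ P θ (r i) s
          = valueV γ P (Function.update θ i θi') φ s - valueV γ P θ φ s) :
    ∃ θs : ∀ i, S → A i → ℝ,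
      feasible θs ∧
      -- θs is a global maximizer of the total potential Φ over X:
      (∀ θ : ∀ i, S → A i → ℝ, feasible θ → Jtot γ P ρ θ φ ≤ Jtot γ P ρ θs φ) ∧
      -- θs is pure (deterministic):
      (∀ i : Fin N, ∀ s : S, ∃ a : A i, θs i s a = 1) ∧
      -- θs is a Nash equilibrium:
      (∀ i : Fin N, ∀ θi' : S → A i → ℝ,
        (∀ s, θi' s ∈ stdSimplex ℝ (A i)) →
        Jtot γ P ρ (Function.update θs i θi') (r i) ≤ Jtot γ P ρ θs (r i)) :=
  mpg_exists_pure_nash_maximizing_potential_general γ hγ0 hγ1 P hP r ρ hρ φ hMPG
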